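/- arXiv:math/0602662 — 2 statements merged into one kernel-verified Lean document; each statement's English description precedes it below -/
import Mathlib

section
/- Fix λ ≠ 0. A continuously differentiable covector field A : ℝ⁴ → ℝ⁴ satisfies the invariance conditions L_ξA = 0 for ξ = e₁, ξ = e₃ and ξ = e₁₃ + λe₂ = (x³, λ, −x¹, 0) if and only if there exist continuously differentiable functions C₁, C₂, f, g : ℝ → ℝ such that for all x: A₁(x) = C₁(x⁴)·sin(x²/λ) + C₂(x⁴)·cos(x²/λ), A₃(x) = C₁(x⁴)·cos(x²/λ) − C₂(x⁴)·sin(x²/λ), A₂(x) = f(x⁴) and A₄(x) = g(x⁴). (This is the class P₍₃,₂₎ for λ ≠ 0.) -/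
open Real

/-- Partial derivative of a scalar function on ℝ⁴ in the j-th coordinate direction. -/
noncomputable def pd (j : Fin 4) (f : (Fin 4 → ℝ) → ℝ) (x : Fin 4 → ℝ) : ℝ :=
  fderiv ℝ f x (Pi.single j 1)

/-- The i-th component of the Lie derivative of the covector field A along
the vector field ξ at the point x:  Σ_j ξ^j ∂_j A_i + Σ_j A_j ∂_i ξ^j. -/
noncomputable def lieCov (ξ A : (Fin 4 → ℝ) → Fin 4 → ℝ) (x : Fin 4 → ℝ) (i : Fin 4) : ℝ :=
  (∑ j : Fin 4, ξ x j * pd j (fun y => A y i) x)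
    + ∑ j : Fin 4, A x j * pd i (fun y => ξ y j) x

/-- Invariance condition L_ξ A = 0 on all of ℝ⁴. -/
def PInvariant (ξ A : (Fin 4 → ℝ) → Fin 4 → ℝ) : Prop :=
  ∀ x i, lieCov ξ A x i = 0

/-- Invariance condition L_ξ A = 0 on a set M. -/
def PInvariantOn (ξ A : (Fin 4 → ℝ) → Fin 4 → ℝ) (M : Set (Fin 4 → ℝ)) : Prop :=
  ∀ x ∈ M, ∀ i, lieCov ξ A x i = 0

def e1 : (Fin 4 → ℝ) → Fin 4 → ℝ := fun _ => ![1, 0, 0, 0]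
def e2 : (Fin 4 → ℝ) → Fin 4 → ℝ := fun _ => ![0, 1, 0, 0]
def e3 : (Fin 4 → ℝ) → Fin 4 → ℝ := fun _ => ![0, 0, 1, 0]
def e4 : (Fin 4 → ℝ) → Fin 4 → ℝ := fun _ => ![0, 0, 0, 1]
def e12 : (Fin 4 → ℝ) → Fin 4 → ℝ := fun x => ![-x 1, x 0, 0, 0]
def e13 : (Fin 4 → ℝ) → Fin 4 → ℝ := fun x => ![x 2, 0, -x 0, 0]
def e23 : (Fin 4 → ℝ) → Fin 4 → ℝ := fun x => ![0, -x 2, x 1, 0]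
def e14 : (Fin 4 → ℝ) → Fin 4 → ℝ := fun x => ![x 3, 0, 0, x 0]
def e24 : (Fin 4 → ℝ) → Fin 4 → ℝ := fun x => ![0, x 3, 0, x 1]
def e34 : (Fin 4 → ℝ) → Fin 4 → ℝ := fun x => ![0, 0, x 3, x 2]

lemma pd_const (j : Fin 4) (c : ℝ) (x : Fin 4 → ℝ) : pd j (fun _ => c) x = 0 := by
  simp [pd]

lemma pd_proj (j k : Fin 4) (x : Fin 4 → ℝ) :
    pd j (fun y => y k) x = if k = j then 1 else 0 := by
  have h : (fun y : Fin 4 → ℝ => y k) = (ContinuousLinearMap.proj k : (Fin 4 → ℝ) →L[ℝ] ℝ) := rfl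
  rw [pd, h, ContinuousLinearMap.fderiv]
  simp [Pi.single_apply]

lemma pd_neg (j : Fin 4) (F : (Fin 4 → ℝ) → ℝ) (x : Fin 4 → ℝ) :
    pd j (fun y => -F y) x = -pd j F x := by
  simp [pd, fderiv_neg]

lemma hasDerivAt_line (F : (Fin 4 → ℝ) → ℝ) (p v : Fin 4 → ℝ) (s : ℝ)
    (hF : DifferentiableAt ℝ F (p + s • v)) :
    HasDerivAt (fun t : ℝ => F (p + t • v)) (fderiv ℝ F (p + s • v) v) s := by
  have h1 : HasDerivAt (fun t : ℝ => p + t • v) v s := by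
    simpa using ((hasDerivAt_id s).smul_const v).const_add p
  exact hF.hasFDerivAt.comp_hasDerivAt s h1

lemma pd_eq_of_hasDerivAt {F : (Fin 4 → ℝ) → ℝ} {x : Fin 4 → ℝ} {j : Fin 4}
    (hF : DifferentiableAt ℝ F x) {c : ℝ}
    (h : HasDerivAt (fun t : ℝ => F (x + t • (Pi.single j 1 : Fin 4 → ℝ))) c 0) : pd j F x = c := by
  have h2 := hasDerivAt_line F x (Pi.single j 1 : Fin 4 → ℝ) 0 (by simpa using hF)
  have := h.unique h2
  rw [pd, this]
  simp

lemma const_of_pd_zero {F : (Fin 4 → ℝ) → ℝ} (hF : Differentiable ℝ F) (j : Fin 4)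
    (h : ∀ x, pd j F x = 0) (x : Fin 4 → ℝ) (t : ℝ) :
    F (Function.update x j t) = F x := by
  have hg : ∀ s : ℝ, HasDerivAt (fun t : ℝ => F (x + t • (Pi.single j 1 : Fin 4 → ℝ))) 0 s := by
    intro s
    have h2 := hasDerivAt_line F x (Pi.single j 1 : Fin 4 → ℝ) s (hF _)
    rwa [show fderiv ℝ F (x + s • (Pi.single j 1 : Fin 4 → ℝ)) (Pi.single j 1)
      = pd j F (x + s • (Pi.single j 1 : Fin 4 → ℝ)) from rfl, h] at h2
  have hc := is_const_of_deriv_eq_zero (fun s => (hg s).differentiableAt)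
    (fun s => (hg s).deriv) (t - x j) 0
  have hupd : Function.update x j t = x + (t - x j) • (Pi.single j 1 : Fin 4 → ℝ) := by
    funext k
    by_cases hk : k = j
    · subst hk; simp
    · simp [Function.update, hk, Pi.single_apply]
  rw [hupd]
  simpa using hc

lemma pd_eq_zero_of_const_line {F : (Fin 4 → ℝ) → ℝ} {x : Fin 4 → ℝ} {j : Fin 4}
    (hF : DifferentiableAt ℝ F x)
    (h : ∀ t : ℝ, F (x + t • (Pi.single j 1 : Fin 4 → ℝ)) = F x) : pd j F x = 0 := by
  refine pd_eq_of_hasDerivAt hF ?_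
  have he : (fun t : ℝ => F (x + t • (Pi.single j 1 : Fin 4 → ℝ))) = fun _ => F x := funext h
  rw [he]; exact hasDerivAt_const _ _


/-- Class P_{3,2} for λ ≠ 0. -/
theorem class_P32_lambda_ne_zero (l : ℝ) (hl : l ≠ 0)
    (A : (Fin 4 → ℝ) → Fin 4 → ℝ) (hA : ContDiff ℝ 1 A) :
    (PInvariant e1 A ∧ PInvariant e3 A ∧
      PInvariant (fun x => ![x 2, l, -x 0, 0]) A) ↔
      ∃ C1 C2 f g : ℝ → ℝ, ContDiff ℝ 1 C1 ∧ ContDiff ℝ 1 C2 ∧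
        ContDiff ℝ 1 f ∧ ContDiff ℝ 1 g ∧
        ∀ x, A x 0 = C1 (x 3) * sin (x 1 / l) + C2 (x 3) * cos (x 1 / l) ∧
          A x 2 = C1 (x 3) * cos (x 1 / l) - C2 (x 3) * sin (x 1 / l) ∧
          A x 1 = f (x 3) ∧ A x 3 = g (x 3) := by
  constructor
  · rintro ⟨h1, h3, hX⟩
    have hAd : ∀ i : Fin 4, Differentiable ℝ (fun y => A y i) := fun i =>
      (ContinuousLinearMap.proj i : ((Fin 4) → ℝ) →L[ℝ] ℝ).differentiable.comp
        (hA.differentiable one_ne_zero)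
    have h0 : ∀ x (i : Fin 4), pd 0 (fun y => A y i) x = 0 := by
      intro x i
      have := h1 x i
      simpa [lieCov, Fin.sum_univ_four, e1, pd_const] using this
    have h2 : ∀ x (i : Fin 4), pd 2 (fun y => A y i) x = 0 := by
      intro x i
      have := h3 x i
      simpa [lieCov, Fin.sum_univ_four, e3, pd_const] using this
    have E0 : ∀ x, pd 1 (fun y => A y 0) x = A x 2 / l := by
      intro x
      have := hX x 0
      simp [lieCov, Fin.sum_univ_four, pd_const, pd_proj, pd_neg, h0, h2] at this
      field_simp
      linarith
    have E2 : ∀ x, pd 1 (fun y => A y 2) x = -A x 0 / l := by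
      intro x
      have := hX x 2
      simp [lieCov, Fin.sum_univ_four, pd_const, pd_proj, pd_neg, h0, h2] at this
      field_simp
      linarith
    have E1 : ∀ x, pd 1 (fun y => A y 1) x = 0 := by
      intro x
      have := hX x 1
      simp [lieCov, Fin.sum_univ_four, pd_const, pd_proj, pd_neg, h0, h2] at this
      rcases this with h | h
      · exact absurd h hl
      · exact h
    have E3 : ∀ x, pd 1 (fun y => A y 3) x = 0 := by
      intro x
      have := hX x 3
      simp [lieCov, Fin.sum_univ_four, pd_const, pd_proj, pd_neg, h0, h2] at this
      rcases this with h | h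
      · exact absurd h hl
      · exact h
    -- reduction to the plane x0 = x2 = 0
    have hconst : ∀ (x : Fin 4 → ℝ) (i : Fin 4), A x i = A ![0, x 1, 0, x 3] i := by
      intro x i
      have e0' : A (Function.update x 0 0) i = A x i :=
        const_of_pd_zero (hAd i) 0 (fun y => h0 y i) x 0
      have e2' : A (Function.update (Function.update x 0 0) 2 0) i
          = A (Function.update x 0 0) i :=
        const_of_pd_zero (hAd i) 2 (fun y => h2 y i) _ 0
      have hupd : Function.update (Function.update x 0 0) 2 0 = ![0, x 1, 0, x 3] := by
        funext k
        fin_cases k <;> simp [Function.update]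
      rw [← e0', ← e2', hupd]
    -- ODE along x1
    have hODE : ∀ t s : ℝ,
        A ![0, s, 0, t] 0 = A ![0, 0, 0, t] 2 * sin (s / l) + A ![0, 0, 0, t] 0 * cos (s / l) ∧
        A ![0, s, 0, t] 2 = A ![0, 0, 0, t] 2 * cos (s / l) - A ![0, 0, 0, t] 0 * sin (s / l) := by
      intro t s
      set p : Fin 4 → ℝ := ![0, 0, 0, t] with hp
      have hq : ∀ s : ℝ, p + s • (Pi.single 1 1 : Fin 4 → ℝ) = ![0, s, 0, t] := by
        intro s
        funext k
        fin_cases k <;> simp [hp, Pi.single_apply]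
      set u : ℝ → ℝ := fun s => A (p + s • (Pi.single 1 1 : Fin 4 → ℝ)) 0 with hu_def
      set v : ℝ → ℝ := fun s => A (p + s • (Pi.single 1 1 : Fin 4 → ℝ)) 2 with hv_def
      have hu : ∀ s : ℝ, HasDerivAt u (v s / l) s := by
        intro s
        have h := hasDerivAt_line (fun y => A y 0) p (Pi.single 1 1 : Fin 4 → ℝ) s (hAd 0 _)
        rwa [show fderiv ℝ (fun y => A y 0) (p + s • (Pi.single 1 1 : Fin 4 → ℝ)) (Pi.single 1 1)
          = pd 1 (fun y => A y 0) (p + s • (Pi.single 1 1 : Fin 4 → ℝ)) from rfl, E0] at h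
      have hv : ∀ s : ℝ, HasDerivAt v (-u s / l) s := by
        intro s
        have h := hasDerivAt_line (fun y => A y 2) p (Pi.single 1 1 : Fin 4 → ℝ) s (hAd 2 _)
        rwa [show fderiv ℝ (fun y => A y 2) (p + s • (Pi.single 1 1 : Fin 4 → ℝ)) (Pi.single 1 1)
          = pd 1 (fun y => A y 2) (p + s • (Pi.single 1 1 : Fin 4 → ℝ)) from rfl, E2] at h
      have hsin : ∀ s : ℝ, HasDerivAt (fun s : ℝ => sin (s / l)) (cos (s / l) * (1 / l)) s := by
        intro s
        exact (Real.hasDerivAt_sin (s / l)).comp s ((hasDerivAt_id s).div_const l)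
      have hcos : ∀ s : ℝ, HasDerivAt (fun s : ℝ => cos (s / l)) (-sin (s / l) * (1 / l)) s := by
        intro s
        exact (Real.hasDerivAt_cos (s / l)).comp s ((hasDerivAt_id s).div_const l)
      have hw1 : ∀ s : ℝ, HasDerivAt (fun s => u s * cos (s / l) - v s * sin (s / l)) 0 s := by
        intro s
        have h := ((hu s).mul (hcos s)).sub ((hv s).mul (hsin s))
        refine h.congr_deriv ?_
        ring
      have hw2 : ∀ s : ℝ, HasDerivAt (fun s => u s * sin (s / l) + v s * cos (s / l)) 0 s := by
        intro s
        have h := ((hu s).mul (hsin s)).add ((hv s).mul (hcos s))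
        refine h.congr_deriv ?_
        ring
      have hw1c : u s * cos (s / l) - v s * sin (s / l) = u 0 := by
        have := is_const_of_deriv_eq_zero (f := fun s => u s * cos (s / l) - v s * sin (s / l))
          (fun s => (hw1 s).differentiableAt) (fun s => (hw1 s).deriv) s 0
        simpa using this
      have hw2c : u s * sin (s / l) + v s * cos (s / l) = v 0 := by
        have := is_const_of_deriv_eq_zero (f := fun s => u s * sin (s / l) + v s * cos (s / l))
          (fun s => (hw2 s).differentiableAt) (fun s => (hw2 s).deriv) s 0
        simpa using this
      have hu0 : u 0 = A ![0, 0, 0, t] 0 := by rw [hu_def]; simp [hq, hp]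
      have hv0 : v 0 = A ![0, 0, 0, t] 2 := by rw [hv_def]; simp [hq, hp]
      have hpyth := Real.sin_sq_add_cos_sq (s / l)
      have hus : A ![0, s, 0, t] 0 = u s := by rw [hu_def]; simp [hq]
      have hvs : A ![0, s, 0, t] 2 = v s := by rw [hv_def]; simp [hq]
      rw [hus, hvs, ← hu0, ← hv0]
      constructor
      · linear_combination cos (s / l) * hw1c + sin (s / l) * hw2c - u s * hpyth
      · linear_combination (- sin (s / l)) * hw1c + cos (s / l) * hw2c - v s * hpyth
    -- independence of x1 for components 1 and 3
    have hconst1 : ∀ (s t : ℝ) (i : Fin 4), pd 1 (fun y => A y i) = 0 →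
        A ![0, s, 0, t] i = A ![0, 0, 0, t] i := by
      intro s t i hi
      have := const_of_pd_zero (hAd i) 1 (fun y => congrFun hi y) ![0, s, 0, t] 0
      have hupd : Function.update ![0, s, 0, t] 1 (0:ℝ) = ![0, 0, 0, t] := by
        funext k
        fin_cases k <;> simp [Function.update]
      rw [hupd] at this
      exact this.symm
    -- define C1 C2 f g
    have hline : ContDiff ℝ 1 (fun t : ℝ => (![0, 0, 0, t] : Fin 4 → ℝ)) := by
      apply contDiff_pi.2
      intro k
      fin_cases k <;> simp <;> first | exact contDiff_const | exact contDiff_id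
    have hCd : ∀ i : Fin 4, ContDiff ℝ 1 (fun t : ℝ => A ![0, 0, 0, t] i) := by
      intro i
      exact (contDiff_pi.1 (hA.comp hline)) i
    refine ⟨fun t => A ![0,0,0,t] 2, fun t => A ![0,0,0,t] 0, fun t => A ![0,0,0,t] 1,
      fun t => A ![0,0,0,t] 3, hCd 2, hCd 0, hCd 1, hCd 3, ?_⟩
    intro x
    have h03 := hODE (x 3) (x 1)
    refine ⟨?_, ?_, ?_, ?_⟩
    · rw [hconst x 0]; exact h03.1
    · rw [hconst x 2]; exact h03.2
    · rw [hconst x 1]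
      exact hconst1 (x 1) (x 3) 1 (by funext y; exact E1 y)
    · rw [hconst x 3]
      exact hconst1 (x 1) (x 3) 3 (by funext y; exact E3 y)
  · rintro ⟨C1, C2, f, g, hC1, hC2, hf, hg, hrep⟩
    have hAd : ∀ (i : Fin 4) (x : Fin 4 → ℝ), DifferentiableAt ℝ (fun y => A y i) x := fun i x =>
      ((ContinuousLinearMap.proj i : ((Fin 4) → ℝ) →L[ℝ] ℝ).differentiable.comp
        (hA.differentiable one_ne_zero)) x
    -- pd in directions 0 and 2 vanish
    have pdz : ∀ (j : Fin 4), j = 0 ∨ j = 2 → ∀ (x) (i : Fin 4), pd j (fun y => A y i) x = 0 := by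
      intro j hj x i
      refine pd_eq_zero_of_const_line (hAd i x) ?_
      intro t
      have h1 : (x + t • (Pi.single j 1 : Fin 4 → ℝ)) 1 = x 1 := by
        rcases hj with h | h <;> subst h <;> simp [Pi.single_apply]
      have h3 : (x + t • (Pi.single j 1 : Fin 4 → ℝ)) 3 = x 3 := by
        rcases hj with h | h <;> subst h <;> simp [Pi.single_apply]
      fin_cases i
      · show A _ 0 = A x 0
        rw [(hrep _).1, (hrep _).1, h1, h3]
      · show A _ 1 = A x 1
        rw [(hrep _).2.2.1, (hrep _).2.2.1, h3]
      · show A _ 2 = A x 2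
        rw [(hrep _).2.1, (hrep _).2.1, h1, h3]
      · show A _ 3 = A x 3
        rw [(hrep _).2.2.2, (hrep _).2.2.2, h3]
    have pd0z : ∀ (x) (i : Fin 4), pd 0 (fun y => A y i) x = 0 := pdz 0 (Or.inl rfl)
    have pd2z : ∀ (x) (i : Fin 4), pd 2 (fun y => A y i) x = 0 := pdz 2 (Or.inr rfl)
    -- coordinates along direction 1
    have hco1 : ∀ (x : Fin 4 → ℝ) (t : ℝ), (x + t • (Pi.single 1 1 : Fin 4 → ℝ)) 1 = x 1 + t := by
      intro x t; simp [Pi.single_apply]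
    have hco3 : ∀ (x : Fin 4 → ℝ) (t : ℝ), (x + t • (Pi.single 1 1 : Fin 4 → ℝ)) 3 = x 3 := by
      intro x t; simp [Pi.single_apply]
    have hder : ∀ x : Fin 4 → ℝ, HasDerivAt (fun t : ℝ => (x 1 + t) / l) (1 / l) 0 :=
      fun x => ((hasDerivAt_id 0).const_add (x 1)).div_const l
    have pd1A0 : ∀ x, pd 1 (fun y => A y 0) x
        = (C1 (x 3) * cos (x 1 / l) - C2 (x 3) * sin (x 1 / l)) / l := by
      intro x
      refine pd_eq_of_hasDerivAt (hAd 0 x) ?_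
      have hfe : (fun t : ℝ => A (x + t • (Pi.single 1 1 : Fin 4 → ℝ)) 0)
          = fun t : ℝ => C1 (x 3) * sin ((x 1 + t) / l) + C2 (x 3) * cos ((x 1 + t) / l) := by
        funext t
        rw [(hrep _).1, hco1, hco3]
      rw [hfe]
      have hs := (HasDerivAt.const_mul (C1 (x 3)) ((Real.hasDerivAt_sin ((x 1 + 0) / l)).comp 0 (hder x)))
      have hc := (HasDerivAt.const_mul (C2 (x 3)) ((Real.hasDerivAt_cos ((x 1 + 0) / l)).comp 0 (hder x)))
      have h := hs.add hc
      refine h.congr_deriv ?_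
      simp only [add_zero]
      field_simp
      ring
    have pd1A2 : ∀ x, pd 1 (fun y => A y 2) x
        = (-(C1 (x 3) * sin (x 1 / l)) - C2 (x 3) * cos (x 1 / l)) / l := by
      intro x
      refine pd_eq_of_hasDerivAt (hAd 2 x) ?_
      have hfe : (fun t : ℝ => A (x + t • (Pi.single 1 1 : Fin 4 → ℝ)) 2)
          = fun t : ℝ => C1 (x 3) * cos ((x 1 + t) / l) - C2 (x 3) * sin ((x 1 + t) / l) := by
        funext t
        rw [(hrep _).2.1, hco1, hco3]
      rw [hfe]
      have hs := (HasDerivAt.const_mul (C2 (x 3)) ((Real.hasDerivAt_sin ((x 1 + 0) / l)).comp 0 (hder x)))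
      have hc := (HasDerivAt.const_mul (C1 (x 3)) ((Real.hasDerivAt_cos ((x 1 + 0) / l)).comp 0 (hder x)))
      have h := hc.sub hs
      refine h.congr_deriv ?_
      simp only [add_zero]
      field_simp
    have pd1A1 : ∀ x, pd 1 (fun y => A y 1) x = 0 := by
      intro x
      refine pd_eq_zero_of_const_line (hAd 1 x) ?_
      intro t
      rw [(hrep _).2.2.1, (hrep _).2.2.1, hco3]
    have pd1A3 : ∀ x, pd 1 (fun y => A y 3) x = 0 := by
      intro x
      refine pd_eq_zero_of_const_line (hAd 3 x) ?_
      intro t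
      rw [(hrep _).2.2.2, (hrep _).2.2.2, hco3]
    refine ⟨?_, ?_, ?_⟩
    · intro x i
      simp [lieCov, Fin.sum_univ_four, e1, pd_const, pd0z]
    · intro x i
      simp [lieCov, Fin.sum_univ_four, e3, pd_const, pd2z]
    · intro x i
      fin_cases i
      · simp [lieCov, Fin.sum_univ_four, pd_const, pd_proj, pd_neg, pd0z, pd2z, pd1A0,
          (hrep x).2.1]
        field_simp
        ring
      · simp [lieCov, Fin.sum_univ_four, pd_const, pd_proj, pd_neg, pd0z, pd2z, pd1A1]
      · simp [lieCov, Fin.sum_univ_four, pd_const, pd_proj, pd_neg, pd0z, pd2z, pd1A2,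
          (hrep x).1]
        field_simp
        ring
      · simp [lieCov, Fin.sum_univ_four, pd_const, pd_proj, pd_neg, pd0z, pd2z, pd1A3]
end

section
/- Fix λ ≠ 0. A continuously differentiable covector field A : ℝ⁴ → ℝ⁴ satisfies the invariance conditions L_ξA = 0 for ξ = e₂, ξ = e₄ and ξ = e₂₄ + λe₃ = (0, x⁴, λ, x²) if and only if there exist continuously differentiable functions f, g, C₁, C₂ : ℝ → ℝ such that for all x: A₁(x) = f(x¹), A₃(x) = g(x¹), A₂(x) = C₁(x¹)·cosh(x³/λ) + C₂(x¹)·sinh(x³/λ) and A₄(x) = −C₁(x¹)·sinh(x³/λ) − C₂(x¹)·cosh(x³/λ). (This is the class P₍₃,₆₎ for λ ≠ 0, hyperbolic helices together with translations in the pseudo-Euclidean plane Ox²x⁴.) -/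
open Real

lemma pd_eq {f : (Fin 4 → ℝ) → ℝ} {x : Fin 4 → ℝ} {L : (Fin 4 → ℝ) →L[ℝ] ℝ}
    (h : HasFDerivAt f L x) (j : Fin 4) : pd j f x = L (Pi.single j 1) := by
  rw [pd, h.fderiv]

lemma pd_coord (j k : Fin 4) (x : Fin 4 → ℝ) :
    pd j (fun y => y k) x = (Pi.single j 1 : Fin 4 → ℝ) k := by
  have : HasFDerivAt (fun y : Fin 4 → ℝ => y k)
      (ContinuousLinearMap.proj (R := ℝ) (φ := fun _ : Fin 4 => ℝ) k) x :=
    (ContinuousLinearMap.proj (R := ℝ) (φ := fun _ : Fin 4 => ℝ) k).hasFDerivAt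
  rw [pd_eq this]
  rfl

lemma lineConst {g : (Fin 4 → ℝ) → ℝ} (hg : Differentiable ℝ g) (j : Fin 4)
    (h : ∀ y, pd j g y = 0) (x : Fin 4 → ℝ) (t : ℝ) :
    g (x + t • (Pi.single j 1 : Fin 4 → ℝ)) = g x := by
  have key : ∀ s : ℝ, HasDerivAt (fun s : ℝ => g (x + s • (Pi.single j 1 : Fin 4 → ℝ))) 0 s := by
    intro s
    have h1 : HasDerivAt (fun s : ℝ => x + s • (Pi.single j 1 : Fin 4 → ℝ))
        ((Pi.single j 1 : Fin 4 → ℝ)) s := by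
      simpa using ((hasDerivAt_id s).smul_const ((Pi.single j 1 : Fin 4 → ℝ))).const_add x
    have h2 := (hg _).hasFDerivAt.comp_hasDerivAt s h1
    have h3 : fderiv ℝ g (x + s • (Pi.single j 1 : Fin 4 → ℝ))
        ((Pi.single j 1 : Fin 4 → ℝ)) = 0 := h _
    rw [h3] at h2
    exact h2
  have hconst := is_const_of_deriv_eq_zero
    (f := fun s : ℝ => g (x + s • (Pi.single j 1 : Fin 4 → ℝ)))
    (fun s => (key s).differentiableAt) (fun s => (key s).deriv) t 0
  simpa using hconst


lemma hasFDerivAt_comp0 {u : ℝ → ℝ} {x : Fin 4 → ℝ} (hu : DifferentiableAt ℝ u (x 0)) :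
    HasFDerivAt (fun y : Fin 4 → ℝ => u (y 0))
      ((deriv u (x 0)) • (ContinuousLinearMap.proj (R := ℝ) (φ := fun _ : Fin 4 => ℝ) 0)) x :=
  hu.hasDerivAt.comp_hasFDerivAt x
    (ContinuousLinearMap.proj (R := ℝ) (φ := fun _ : Fin 4 => ℝ) 0).hasFDerivAt

lemma hasFDerivAt_comp2 {v : ℝ → ℝ} {x : Fin 4 → ℝ} (hv : DifferentiableAt ℝ v (x 2)) :
    HasFDerivAt (fun y : Fin 4 → ℝ => v (y 2))
      ((deriv v (x 2)) • (ContinuousLinearMap.proj (R := ℝ) (φ := fun _ : Fin 4 => ℝ) 2)) x :=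
  hv.hasDerivAt.comp_hasFDerivAt x
    (ContinuousLinearMap.proj (R := ℝ) (φ := fun _ : Fin 4 => ℝ) 2).hasFDerivAt

lemma pd_comp0 {u : ℝ → ℝ} {x : Fin 4 → ℝ} (hu : DifferentiableAt ℝ u (x 0)) (j : Fin 4) :
    pd j (fun y => u (y 0)) x = deriv u (x 0) * (Pi.single j 1 : Fin 4 → ℝ) 0 := by
  rw [pd_eq (hasFDerivAt_comp0 hu)]; rfl

lemma pd_mix2 {u1 v1 u2 v2 : ℝ → ℝ} {x : Fin 4 → ℝ}
    (hu1 : DifferentiableAt ℝ u1 (x 0)) (hv1 : DifferentiableAt ℝ v1 (x 2))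
    (hu2 : DifferentiableAt ℝ u2 (x 0)) (hv2 : DifferentiableAt ℝ v2 (x 2)) (j : Fin 4) :
    pd j (fun y => u1 (y 0) * v1 (y 2) + u2 (y 0) * v2 (y 2)) x
      = (deriv u1 (x 0) * v1 (x 2) + deriv u2 (x 0) * v2 (x 2)) * (Pi.single j 1 : Fin 4 → ℝ) 0
        + (u1 (x 0) * deriv v1 (x 2) + u2 (x 0) * deriv v2 (x 2)) * (Pi.single j 1 : Fin 4 → ℝ) 2 := by
  have h1 := ((hasFDerivAt_comp0 hu1).mul (hasFDerivAt_comp2 hv1)).add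
    ((hasFDerivAt_comp0 hu2).mul (hasFDerivAt_comp2 hv2))
  rw [pd_eq (f := fun y => u1 (y 0) * v1 (y 2) + u2 (y 0) * v2 (y 2)) h1]
  simp [ContinuousLinearMap.proj_apply, smul_eq_mul]
  ring



/-- Class P_{3,6} for λ ≠ 0: hyperbolic helices with translations in the plane Ox²x⁴. -/
theorem class_P36_lambda_ne_zero (l : ℝ) (hl : l ≠ 0)
    (A : (Fin 4 → ℝ) → Fin 4 → ℝ) (hA : ContDiff ℝ 1 A) :
    (PInvariant e2 A ∧ PInvariant e4 A ∧
      PInvariant (fun x => ![0, x 3, l, x 1]) A) ↔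
      ∃ f g C1 C2 : ℝ → ℝ, ContDiff ℝ 1 f ∧ ContDiff ℝ 1 g ∧
        ContDiff ℝ 1 C1 ∧ ContDiff ℝ 1 C2 ∧
        ∀ x, A x 0 = f (x 0) ∧ A x 2 = g (x 0) ∧
          A x 1 = C1 (x 0) * cosh (x 2 / l) + C2 (x 0) * sinh (x 2 / l) ∧
          A x 3 = -(C1 (x 0) * sinh (x 2 / l)) - C2 (x 0) * cosh (x 2 / l) := by
  constructor
  · rintro ⟨h2, h4, h3⟩

    have diffA : ∀ i, Differentiable ℝ (fun y => A y i) := fun i =>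
      (ContinuousLinearMap.proj (R := ℝ) (φ := fun _ : Fin 4 => ℝ) i).differentiable.comp
        (hA.differentiable one_ne_zero)
    --翻訳 of the invariance conditions
    have hz1 : ∀ y i, pd 1 (fun y' => A y' i) y = 0 := by
      intro y i
      have := h2 y i
      simpa [lieCov, Fin.sum_univ_four, e2, pd_const] using this
    have hz3 : ∀ y i, pd 3 (fun y' => A y' i) y = 0 := by
      intro y i
      have := h4 y i
      simpa [lieCov, Fin.sum_univ_four, e4, pd_const] using this
    have heq : ∀ y i, l * pd 2 (fun y' => A y' i) y
        + A y 1 * (Pi.single i 1 : Fin 4 → ℝ) 3 + A y 3 * (Pi.single i 1 : Fin 4 → ℝ) 1 = 0 := by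
      intro y i
      have := h3 y i
      simp only [lieCov, Fin.sum_univ_four, Matrix.cons_val_zero, Matrix.cons_val_one,
        Matrix.head_cons, Matrix.cons_val_two, Matrix.tail_cons, Matrix.cons_val_three,
        pd_const, pd_coord, hz1, hz3] at this
      linarith [this]
    have h2A0 : ∀ y, pd 2 (fun y' => A y' 0) y = 0 := by
      intro y
      have := heq y 0
      simp [Pi.single_apply] at this
      rcases this with h' | h'
      · exact absurd h' hl
      · exact h'
    have h2A2 : ∀ y, pd 2 (fun y' => A y' 2) y = 0 := by
      intro y
      have := heq y 2
      simp [Pi.single_apply] at this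
      rcases this with h' | h'
      · exact absurd h' hl
      · exact h'
    have h2A1 : ∀ y, pd 2 (fun y' => A y' 1) y = -(A y 3) / l := by
      intro y
      have := heq y 1
      simp [Pi.single_apply] at this
      field_simp
      linarith
    have h2A3 : ∀ y, pd 2 (fun y' => A y' 3) y = -(A y 1) / l := by
      intro y
      have := heq y 3
      simp [Pi.single_apply] at this
      field_simp
      linarith
    -- constancy in directions 1 and 3
    have cA : ∀ (x : Fin 4 → ℝ) i, A x i = A ![x 0, 0, x 2, 0] i := by
      intro x i
      have ex : x = (![x 0, 0, x 2, 0] + (x 1) • (Pi.single 1 1 : Fin 4 → ℝ))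
          + (x 3) • (Pi.single 3 1 : Fin 4 → ℝ) := by
        funext k
        simp only [Pi.add_apply, Pi.smul_apply, smul_eq_mul, Pi.single_apply]
        fin_cases k <;> simp
      conv_lhs => rw [ex]
      rw [lineConst (diffA i) 3 (fun y => hz3 y i),
        lineConst (diffA i) 1 (fun y => hz1 y i)]
    have ex2 : ∀ x : Fin 4 → ℝ,
        (![x 0, 0, x 2, 0] : Fin 4 → ℝ)
          = ![x 0, 0, 0, 0] + (x 2) • (Pi.single 2 1 : Fin 4 → ℝ) := by
      intro x; funext k
      simp only [Pi.add_apply, Pi.smul_apply, smul_eq_mul, Pi.single_apply]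
      fin_cases k <;> simp
    have cA0 : ∀ x : Fin 4 → ℝ, A ![x 0, 0, x 2, 0] 0 = A ![x 0, 0, 0, 0] 0 := by
      intro x
      rw [ex2 x, lineConst (diffA 0) 2 h2A0]
    have cA2 : ∀ x : Fin 4 → ℝ, A ![x 0, 0, x 2, 0] 2 = A ![x 0, 0, 0, 0] 2 := by
      intro x
      rw [ex2 x, lineConst (diffA 2) 2 h2A2]
    -- smoothness of the restriction
    have hemb : ContDiff ℝ 1 (fun t : ℝ => (![t, 0, 0, 0] : Fin 4 → ℝ)) := by
      rw [contDiff_pi]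
      intro i
      fin_cases i
      · exact contDiff_id
      · simpa using contDiff_const
      · simpa using contDiff_const
      · simpa using contDiff_const
    have hcomp : ∀ i, ContDiff ℝ 1 (fun t : ℝ => A ![t, 0, 0, 0] i) := fun i =>
      contDiff_pi.1 (hA.comp hemb) i
    refine ⟨fun t => A ![t, 0, 0, 0] 0, fun t => A ![t, 0, 0, 0] 2,
      fun t => A ![t, 0, 0, 0] 1, fun t => -(A ![t, 0, 0, 0] 3),
      hcomp 0, hcomp 2, hcomp 1, (hcomp 3).neg, ?_⟩
    intro x
    -- hyperbolic derivative facts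
    have hch : ∀ t : ℝ, HasDerivAt (fun r : ℝ => cosh (r / l)) (sinh (t / l) * (1 / l)) t :=
      fun t => by have := (Real.hasDerivAt_cosh (t / l)).comp t ((hasDerivAt_id t).div_const l); exact this
    have hsh : ∀ t : ℝ, HasDerivAt (fun r : ℝ => sinh (r / l)) (cosh (t / l) * (1 / l)) t :=
      fun t => by have := (Real.hasDerivAt_sinh (t / l)).comp t ((hasDerivAt_id t).div_const l); exact this
    -- the path s ↦ (x0, 0, s, 0)
    set p : ℝ → (Fin 4 → ℝ) := fun s => ![x 0, 0, s, 0] with hpdef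
    have hp : ∀ s : ℝ, HasDerivAt p ((Pi.single 2 1 : Fin 4 → ℝ)) s := by
      intro s
      have : p = fun s : ℝ => (![x 0, 0, 0, 0] : Fin 4 → ℝ) + s • (Pi.single 2 1 : Fin 4 → ℝ) := by
        funext s k
        simp only [hpdef, Pi.add_apply, Pi.smul_apply, smul_eq_mul, Pi.single_apply]
        fin_cases k <;> simp
      rw [this]
      simpa only [one_smul, id_eq] using
        ((hasDerivAt_id s).smul_const ((Pi.single 2 1 : Fin 4 → ℝ))).const_add
          (![x 0, 0, 0, 0] : Fin 4 → ℝ)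
    have hP : ∀ s : ℝ, HasDerivAt (fun s => A (p s) 1) (-(A (p s) 3) / l) s := by
      intro s
      have hc := ((diffA 1) (p s)).hasFDerivAt.comp_hasDerivAt s (hp s)
      have : fderiv ℝ (fun y => A y 1) (p s) ((Pi.single 2 1 : Fin 4 → ℝ))
          = -(A (p s) 3) / l := h2A1 (p s)
      rwa [this] at hc
    have hQ : ∀ s : ℝ, HasDerivAt (fun s => A (p s) 3) (-(A (p s) 1) / l) s := by
      intro s
      have hc := ((diffA 3) (p s)).hasFDerivAt.comp_hasDerivAt s (hp s)
      have : fderiv ℝ (fun y => A y 3) (p s) ((Pi.single 2 1 : Fin 4 → ℝ))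
          = -(A (p s) 1) / l := h2A3 (p s)
      rwa [this] at hc
    have hK1 : ∀ s : ℝ, HasDerivAt
        (fun s => A (p s) 1 * cosh (s / l) + A (p s) 3 * sinh (s / l)) 0 s := by
      intro s
      have := ((hP s).mul (hch s)).add ((hQ s).mul (hsh s))
      refine this.congr_deriv ?_
      ring
    have hK2 : ∀ s : ℝ, HasDerivAt
        (fun s => A (p s) 1 * sinh (s / l) + A (p s) 3 * cosh (s / l)) 0 s := by
      intro s
      have := ((hP s).mul (hsh s)).add ((hQ s).mul (hch s))
      refine this.congr_deriv ?_
      ring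
    have k1 := is_const_of_deriv_eq_zero
      (f := fun s => A (p s) 1 * cosh (s / l) + A (p s) 3 * sinh (s / l))
      (fun s => (hK1 s).differentiableAt) (fun s => (hK1 s).deriv) (x 2) 0
    have k2 := is_const_of_deriv_eq_zero
      (f := fun s => A (p s) 1 * sinh (s / l) + A (p s) 3 * cosh (s / l))
      (fun s => (hK2 s).differentiableAt) (fun s => (hK2 s).deriv) (x 2) 0
    simp only [zero_div, Real.cosh_zero, Real.sinh_zero, mul_one, mul_zero, add_zero,
      zero_add] at k1 k2
    have hp2 : p (x 2) = ![x 0, 0, x 2, 0] := rfl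
    have hp0 : p 0 = ![x 0, 0, 0, 0] := rfl
    rw [hp2, hp0] at k1 k2
    have idh := Real.cosh_sq_sub_sinh_sq (x 2 / l)
    refine ⟨?_, ?_, ?_, ?_⟩
    · rw [cA x 0, cA0 x]
    · rw [cA x 2, cA2 x]
    · rw [cA x 1]
      linear_combination cosh (x 2 / l) * k1 - sinh (x 2 / l) * k2
        - (A ![x 0, 0, x 2, 0] 1) * idh
    · rw [cA x 3]
      linear_combination (-sinh (x 2 / l)) * k1 + cosh (x 2 / l) * k2
        - (A ![x 0, 0, x 2, 0] 3) * idh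
  · rintro ⟨f, g, C1, C2, hf, hg, hC1, hC2, h⟩

    have hA0 : (fun y => A y 0) = fun y : Fin 4 → ℝ => f (y 0) := funext fun y => (h y).1
    have hA2 : (fun y => A y 2) = fun y : Fin 4 → ℝ => g (y 0) := funext fun y => (h y).2.1
    have hA1 : (fun y => A y 1) = fun y : Fin 4 → ℝ =>
        C1 (y 0) * cosh (y 2 / l) + C2 (y 0) * sinh (y 2 / l) := funext fun y => (h y).2.2.1
    have hA3 : (fun y => A y 3) = fun y : Fin 4 → ℝ =>
        (fun t => -C1 t) (y 0) * sinh (y 2 / l) + (fun t => -C2 t) (y 0) * cosh (y 2 / l) := by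
      funext y
      have := (h y).2.2.2
      simp only [this]; ring
    -- derivative facts
    have hch : ∀ t : ℝ, HasDerivAt (fun r : ℝ => cosh (r / l)) (sinh (t / l) * (1 / l)) t :=
      fun t => by have := (Real.hasDerivAt_cosh (t / l)).comp t ((hasDerivAt_id t).div_const l); exact this
    have hsh : ∀ t : ℝ, HasDerivAt (fun r : ℝ => sinh (r / l)) (cosh (t / l) * (1 / l)) t :=
      fun t => by have := (Real.hasDerivAt_sinh (t / l)).comp t ((hasDerivAt_id t).div_const l); exact this
    have dch : ∀ t : ℝ, deriv (fun r : ℝ => cosh (r / l)) t = sinh (t / l) * (1 / l) :=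
      fun t => (hch t).deriv
    have dsh : ∀ t : ℝ, deriv (fun r : ℝ => sinh (r / l)) t = cosh (t / l) * (1 / l) :=
      fun t => (hsh t).deriv
    have dc1 : ∀ t : ℝ, DifferentiableAt ℝ C1 t := fun t => (hC1.differentiable one_ne_zero) t
    have dc2 : ∀ t : ℝ, DifferentiableAt ℝ C2 t := fun t => (hC2.differentiable one_ne_zero) t
    have dnc1 : ∀ t : ℝ, DifferentiableAt ℝ (fun t => -C1 t) t := fun t => (dc1 t).neg
    have dnc2 : ∀ t : ℝ, DifferentiableAt ℝ (fun t => -C2 t) t := fun t => (dc2 t).neg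
    have dnc1' : ∀ t : ℝ, deriv (fun t => -C1 t) t = -deriv C1 t := fun t => deriv.neg
    have dnc2' : ∀ t : ℝ, deriv (fun t => -C2 t) t = -deriv C2 t := fun t => deriv.neg
    have dfh : ∀ t : ℝ, DifferentiableAt ℝ f t := fun t => (hf.differentiable one_ne_zero) t
    have dgh : ∀ t : ℝ, DifferentiableAt ℝ g t := fun t => (hg.differentiable one_ne_zero) t
    have dchd : ∀ t : ℝ, DifferentiableAt ℝ (fun r : ℝ => cosh (r / l)) t :=
      fun t => (hch t).differentiableAt
    have dshd : ∀ t : ℝ, DifferentiableAt ℝ (fun r : ℝ => sinh (r / l)) t :=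
      fun t => (hsh t).differentiableAt
    have key : ∀ (x : Fin 4 → ℝ) (j : Fin 4), (j = 1 ∨ j = 3) →
        ∀ i, pd j (fun y => A y i) x = 0 := by
      intro x j hj i
      fin_cases i
      · rw [show (fun y => A y (⟨0, by norm_num⟩ : Fin 4)) = fun y : Fin 4 → ℝ => f (y 0) from hA0,
          pd_comp0 (dfh _)]
        rcases hj with h' | h' <;> subst h' <;> simp
      · rw [show (fun y => A y (⟨1, by norm_num⟩ : Fin 4)) = _ from hA1,
          pd_mix2 (dc1 _) (dchd _) (dc2 _) (dshd _)]
        rcases hj with h' | h' <;> subst h' <;> simp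
      · rw [show (fun y => A y (⟨2, by norm_num⟩ : Fin 4)) = fun y : Fin 4 → ℝ => g (y 0) from hA2,
          pd_comp0 (dgh _)]
        rcases hj with h' | h' <;> subst h' <;> simp
      · rw [show (fun y => A y (⟨3, by norm_num⟩ : Fin 4)) = _ from hA3,
          pd_mix2 (dnc1 _) (dshd _) (dnc2 _) (dchd _)]
        rcases hj with h' | h' <;> subst h' <;> simp
    refine ⟨?_, ?_, ?_⟩
    · intro x i
      simp only [lieCov, Fin.sum_univ_four, e2, Matrix.cons_val_zero, Matrix.cons_val_one,
        Matrix.head_cons, Matrix.cons_val_two, Matrix.tail_cons, Matrix.cons_val_three,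
        pd_const]
      rw [key x 1 (Or.inl rfl) i]
      ring
    · intro x i
      simp only [lieCov, Fin.sum_univ_four, e4, Matrix.cons_val_zero, Matrix.cons_val_one,
        Matrix.head_cons, Matrix.cons_val_two, Matrix.tail_cons, Matrix.cons_val_three,
        pd_const]
      rw [key x 3 (Or.inr rfl) i]
      ring
    · intro x i
      simp only [lieCov, Fin.sum_univ_four, Matrix.cons_val_zero, Matrix.cons_val_one,
        Matrix.head_cons, Matrix.cons_val_two, Matrix.tail_cons, Matrix.cons_val_three,
        pd_const, pd_coord]
      rw [key x 1 (Or.inl rfl) i, key x 3 (Or.inr rfl) i]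
      simp only [zero_mul, mul_zero, add_zero, zero_add]
      fin_cases i
      · rw [show (fun y => A y (⟨0, by norm_num⟩ : Fin 4)) = fun y : Fin 4 → ℝ => f (y 0) from hA0,
          pd_comp0 (dfh _)]
        simp [Pi.single_apply]
      · rw [show (fun y => A y (⟨1, by norm_num⟩ : Fin 4)) = _ from hA1,
          pd_mix2 (dc1 _) (dchd _) (dc2 _) (dshd _)]
        rw [(h x).2.2.2]
        simp [dch, dsh, Pi.single_apply]
        field_simp
        ring
      · rw [show (fun y => A y (⟨2, by norm_num⟩ : Fin 4)) = fun y : Fin 4 → ℝ => g (y 0) from hA2,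
          pd_comp0 (dgh _)]
        simp [Pi.single_apply]
      · rw [show (fun y => A y (⟨3, by norm_num⟩ : Fin 4)) = _ from hA3,
          pd_mix2 (dnc1 _) (dshd _) (dnc2 _) (dchd _)]
        rw [(h x).2.2.1]
        simp [dch, dsh, Pi.single_apply]
        field_simp
        ring
end
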